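/- Let c, c', p, p', q, q' be integers with 0 < c ≤ c', and define the binary relation R on finite sets of integers by: R A B holds iff A and B are nonempty, A = B ∪ {min A}, max A = max B, c ≤ min B − min A ≤ c', p ≤ max A − min A ≤ p', and q ≤ max B − min B ≤ q'. Then for all finite sets of integers A and A', the reflexive–transitive closure of R relates A to A' if and only if A = A', or R A A', or there exists B with R A B and R B A', or there exist nonempty finite sets of integers A₁ and A₂ such that: A' is nonempty, A = A₁ ∪ {min A}, A₂ = A' ∪ {min A₂}, max A = max A₁, max A₂ = max A', A₂ ⊆ A₁, A₁ \ A₂ is nonempty, max(A₁ \ A₂) < min A₂, p ≤ max A − min A ≤ p', p ≤ max A₂ − min A₂ ≤ p', q ≤ max A₁ − min A₁ ≤ q', q ≤ max A' − min A' ≤ q', c ≤ min A₁ − min A ≤ c', c ≤ min A' − min A₂ ≤ c', and for all integers y, z such that z is the successor of y in (A₁ \ A₂) ∪ {min A₂}, one has c ≤ z − y ≤ c'. -/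
import Mathlib

/-- Minimum of a finite set of integers (default 0 on the empty set). -/
def zmin (A : Finset ℤ) : ℤ := if h : A.Nonempty then A.min' h else 0

/-- Maximum of a finite set of integers (default 0 on the empty set). -/
def zmax (A : Finset ℤ) : ℤ := if h : A.Nonempty then A.max' h else 0

/-- `z` is the successor of `y` in the finite set `A`. -/
def isSucc (A : Finset ℤ) (y z : ℤ) : Prop :=
  y ∈ A ∧ z ∈ A ∧ y < z ∧ ∀ w ∈ A, w ≤ y ∨ z ≤ w

/-- The difference-bound set relation of the strict case of Subcase II(ii). -/
def RII (c c' p p' q q' : ℤ) (A B : Finset ℤ) : Prop :=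
  A.Nonempty ∧ B.Nonempty ∧ A = B ∪ {zmin A} ∧ zmax A = zmax B ∧
    c ≤ zmin B - zmin A ∧ zmin B - zmin A ≤ c' ∧
    p ≤ zmax A - zmin A ∧ zmax A - zmin A ≤ p' ∧
    q ≤ zmax B - zmin B ∧ zmax B - zmin B ≤ q'

lemma zmin_le {A : Finset ℤ} {x : ℤ} (hx : x ∈ A) : zmin A ≤ x := by
  rw [zmin, dif_pos ⟨x, hx⟩]; exact A.min'_le x hx

lemma le_zmax {A : Finset ℤ} {x : ℤ} (hx : x ∈ A) : x ≤ zmax A := by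
  rw [zmax, dif_pos ⟨x, hx⟩]; exact A.le_max' x hx

lemma zmin_mem {A : Finset ℤ} (h : A.Nonempty) : zmin A ∈ A := by
  rw [zmin, dif_pos h]; exact A.min'_mem h

lemma zmax_mem {A : Finset ℤ} (h : A.Nonempty) : zmax A ∈ A := by
  rw [zmax, dif_pos h]; exact A.max'_mem h

lemma zmin_unique {A : Finset ℤ} {m : ℤ} (hm : m ∈ A) (h : ∀ x ∈ A, m ≤ x) :
    zmin A = m :=
  le_antisymm (zmin_le hm) (h _ (zmin_mem ⟨m, hm⟩))

lemma zmax_unique {A : Finset ℤ} {m : ℤ} (hm : m ∈ A) (h : ∀ x ∈ A, x ≤ m) :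
    zmax A = m :=
  le_antisymm (h _ (zmax_mem ⟨m, hm⟩)) (le_zmax hm)

lemma isSucc_union_top {S : Finset ℤ} {t y z : ℤ} (hS : ∀ x ∈ S, x < t)
    (h : isSucc (S ∪ {t}) y z) :
    isSucc S y z ∨ (y ∈ S ∧ (∀ w ∈ S, w ≤ y) ∧ z = t) := by
  obtain ⟨hy, hz, hyz, hw⟩ := h
  simp only [Finset.mem_union, Finset.mem_singleton] at hy hz
  by_cases hzt : z = t
  · subst hzt
    have hyS : y ∈ S := by
      rcases hy with h1 | h1
      · exact h1
      · exact absurd h1 (by intro h'; subst h'; exact lt_irrefl _ hyz)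
    right
    refine ⟨hyS, fun w hw' => ?_, rfl⟩
    rcases hw w (Finset.mem_union_left _ hw') with h1 | h1
    · exact h1
    · exact absurd (hS w hw') (not_lt.mpr h1)
  · have hzS : z ∈ S := hz.resolve_right hzt
    have hyS : y ∈ S := by
      rcases hy with h1 | h1
      · exact h1
      · subst h1; exact absurd (hS z hzS) (not_lt.mpr hyz.le)
    exact Or.inl ⟨hyS, hzS, hyz, fun w hw' => hw w (Finset.mem_union_left _ hw')⟩

lemma isSucc_erase_min {S : Finset ℤ} {m y z : ℤ} (hmin : ∀ x ∈ S, m ≤ x)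
    (h : isSucc (S.erase m) y z) : isSucc S y z := by
  obtain ⟨hy, hz, hyz, hw⟩ := h
  refine ⟨Finset.mem_of_mem_erase hy, Finset.mem_of_mem_erase hz, hyz, fun w hwS => ?_⟩
  by_cases hwm : w = m
  · exact Or.inl (hwm ▸ hmin y (Finset.mem_of_mem_erase hy))
  · exact hw w (Finset.mem_erase.mpr ⟨hwm, hwS⟩)

/-- Chain construction: remove minima one by one from `A₁` down to `A₂`. -/
lemma chain_lemma (c c' p p' q q' : ℤ) (hc : 0 < c) :
    ∀ n : ℕ, ∀ A₁ A₂ : Finset ℤ, (A₁ \ A₂).card = n →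
      A₂.Nonempty → A₂ ⊆ A₁ →
      (∀ x ∈ A₁ \ A₂, x < zmin A₂) →
      zmax A₁ = zmax A₂ →
      (∀ y z : ℤ, isSucc ((A₁ \ A₂) ∪ {zmin A₂}) y z → c ≤ z - y ∧ z - y ≤ c') →
      p ≤ zmax A₂ - zmin A₂ → zmax A₁ - zmin A₁ ≤ p' →
      q ≤ zmax A₂ - zmin A₂ → zmax A₁ - zmin A₁ ≤ q' →
      Relation.ReflTransGen (RII c c' p p' q q') A₁ A₂ := by
  intro n
  induction n with
  | zero =>
    intro A₁ A₂ hcard hA₂ne hsub _ _ _ _ _ _ _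
    have hempty : A₁ \ A₂ = ∅ := Finset.card_eq_zero.mp hcard
    have : A₁ = A₂ := Finset.Subset.antisymm
      (fun x hx => by
        by_contra hxA₂
        have : x ∈ A₁ \ A₂ := Finset.mem_sdiff.mpr ⟨hx, hxA₂⟩
        rw [hempty] at this; exact absurd this (Finset.notMem_empty x))
      hsub
    rw [this]
  | succ n ih =>
    intro A₁ A₂ hcard hA₂ne hsub hord hmax hgap hp hp' hq hq'
    set D := A₁ \ A₂ with hD
    have hDne : D.Nonempty := Finset.card_pos.mp (by omega)
    have hA₁ne : A₁.Nonempty := hA₂ne.mono hsub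
    set m := zmin A₁ with hm
    have hmA₁ : m ∈ A₁ := zmin_mem hA₁ne
    obtain ⟨d, hd⟩ := hDne
    have hmnA₂ : m ∉ A₂ := by
      intro hmem
      have h1 : zmin A₂ ≤ m := zmin_le hmem
      have h2 : m ≤ d := zmin_le (Finset.mem_sdiff.mp hd).1
      have h3 : d < zmin A₂ := hord d hd
      omega
    have hmD : m ∈ D := Finset.mem_sdiff.mpr ⟨hmA₁, hmnA₂⟩
    set B := A₁.erase m with hB
    have hsubB : A₂ ⊆ B := fun x hx =>
      Finset.mem_erase.mpr ⟨fun h => hmnA₂ (h ▸ hx), hsub hx⟩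
    have hBne : B.Nonempty := hA₂ne.mono hsubB
    have hBsub : B ⊆ A₁ := Finset.erase_subset m A₁
    have hm' : zmin B ∈ B := zmin_mem hBne
    have hm'leA₂ : zmin B ≤ zmin A₂ := zmin_le (hsubB (zmin_mem hA₂ne))
    have hmltm' : m < zmin B := by
      have h1 : m ≤ zmin B := zmin_le (hBsub hm')
      have h2 : m ∉ B := Finset.notMem_erase m A₁
      rcases lt_or_eq_of_le h1 with h | h
      · exact h
      · exact absurd (h ▸ hm') h2
    have hm'S : zmin B ∈ D ∪ {zmin A₂} := by
      by_cases hmem : zmin B ∈ A₂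
      · have : zmin A₂ ≤ zmin B := zmin_le hmem
        have : zmin B = zmin A₂ := le_antisymm hm'leA₂ this
        rw [this]; exact Finset.mem_union_right _ (Finset.mem_singleton_self _)
      · exact Finset.mem_union_left _ (Finset.mem_sdiff.mpr ⟨hBsub hm', hmem⟩)
    have hsucc : isSucc (D ∪ {zmin A₂}) m (zmin B) := by
      refine ⟨Finset.mem_union_left _ hmD, hm'S, hmltm', fun w hw => ?_⟩
      rcases Finset.mem_union.mp hw with h1 | h1
      · by_cases hwm : w = m
        · exact Or.inl (le_of_eq hwm)
        · exact Or.inr (zmin_le (Finset.mem_erase.mpr ⟨hwm, (Finset.mem_sdiff.mp h1).1⟩))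
      · exact Or.inr (le_trans hm'leA₂ (le_of_eq (Finset.mem_singleton.mp h1).symm))
    obtain ⟨hgap1, hgap2⟩ := hgap m (zmin B) hsucc
    have hA₁eqB : A₁ = B ∪ {m} := by
      rw [Finset.union_comm, ← Finset.insert_eq, Finset.insert_erase hmA₁]
    have hmaxB : zmax A₁ = zmax B := by
      have h1 : zmax A₁ ∈ B := by
        rw [hmax]; exact hsubB (zmax_mem hA₂ne)
      exact (zmax_unique h1 (fun x hx => le_zmax (hBsub hx))).symm
    have hmltzA₂ : m < zmin A₂ := hord m hmD
    have hminA₂le : zmin A₂ ≤ zmax A₂ := zmin_le (zmax_mem hA₂ne)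
    have hRII : RII c c' p p' q q' A₁ B := by
      refine ⟨hA₁ne, hBne, hA₁eqB, hmaxB, hgap1, hgap2, ?_, hp', ?_, ?_⟩
      · rw [hmax] at *; omega
      · rw [← hmaxB, hmax]; omega
      · rw [← hmaxB]; omega
    have hBD : B \ A₂ = D.erase m := by
      ext x
      simp only [Finset.mem_sdiff, Finset.mem_erase, hB, hD]
      tauto
    have hcard' : (B \ A₂).card = n := by
      rw [hBD, Finset.card_erase_of_mem hmD, hcard]; omega
    have hne' : zmin A₂ ≠ m := by omega
    have hSerase : (B \ A₂) ∪ {zmin A₂} = (D ∪ {zmin A₂}).erase m := by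
      rw [hBD]
      ext x
      simp only [Finset.mem_union, Finset.mem_erase, Finset.mem_singleton]
      constructor
      · rintro (⟨hxm, hxD⟩ | hx)
        · exact ⟨hxm, Or.inl hxD⟩
        · exact ⟨hx ▸ hne', Or.inr hx⟩
      · rintro ⟨hxm, hxD | hx⟩
        · exact Or.inl ⟨hxm, hxD⟩
        · exact Or.inr hx
    have hminS : ∀ x ∈ D ∪ {zmin A₂}, m ≤ x := by
      intro x hx
      rcases Finset.mem_union.mp hx with h1 | h1
      · exact zmin_le (Finset.mem_sdiff.mp h1).1
      · rw [Finset.mem_singleton.mp h1]; omega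
    refine Relation.ReflTransGen.head hRII (ih B A₂ hcard' hA₂ne hsubB ?_ ?_ ?_ hp ?_ hq ?_)
    · intro x hx
      rw [hBD] at hx
      exact hord x (Finset.mem_of_mem_erase hx)
    · rw [← hmaxB, hmax]
    · intro y z hyz
      rw [hSerase] at hyz
      exact hgap y z (isSucc_erase_min hminS hyz)
    · rw [← hmaxB] at *; omega
    · rw [← hmaxB] at *; omega
def PII (c c' p p' q q' : ℤ) (A A' : Finset ℤ) : Prop :=
  A = A' ∨ RII c c' p p' q q' A A' ∨
    (∃ B, RII c c' p p' q q' A B ∧ RII c c' p p' q q' B A') ∨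
    ∃ A₁ A₂ : Finset ℤ, A₁.Nonempty ∧ A₂.Nonempty ∧ A'.Nonempty ∧
      A = A₁ ∪ {zmin A} ∧ A₂ = A' ∪ {zmin A₂} ∧
      zmax A = zmax A₁ ∧ zmax A₂ = zmax A' ∧
      A₂ ⊆ A₁ ∧ (A₁ \ A₂).Nonempty ∧ zmax (A₁ \ A₂) < zmin A₂ ∧
      p ≤ zmax A - zmin A ∧ zmax A - zmin A ≤ p' ∧
      p ≤ zmax A₂ - zmin A₂ ∧ zmax A₂ - zmin A₂ ≤ p' ∧
      q ≤ zmax A₁ - zmin A₁ ∧ zmax A₁ - zmin A₁ ≤ q' ∧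
      q ≤ zmax A' - zmin A' ∧ zmax A' - zmin A' ≤ q' ∧
      c ≤ zmin A₁ - zmin A ∧ zmin A₁ - zmin A ≤ c' ∧
      c ≤ zmin A' - zmin A₂ ∧ zmin A' - zmin A₂ ≤ c' ∧
      ∀ y z : ℤ, isSucc ((A₁ \ A₂) ∪ {zmin A₂}) y z → c ≤ z - y ∧ z - y ≤ c'

lemma forward_step (c c' p p' q q' : ℤ) (hc : 0 < c)
    {A B A' : Finset ℤ} (hP : PII c c' p p' q q' A B)
    (hstep : RII c c' p p' q q' B A') : PII c c' p p' q q' A A' := by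
  rcases hP with rfl | hAB | ⟨C, hAC, hCB⟩ |
    ⟨A₁, A₂, h1, h2, h3, h4, h5, h6, h7, h8, h9, h10, h11, h12, h13, h14, h15,
      h16, h17, h18, h19, h20, h21, h22, h23⟩
  · exact Or.inr (Or.inl hstep)
  · exact Or.inr (Or.inr (Or.inl ⟨B, hAB, hstep⟩))
  · -- two previous steps: build the four-set case with A₁ := C, A₂ := B
    obtain ⟨hAne, hCne, hACeq, hmaxAC, hc1, hc2, hp1, hp2, hq1, hq2⟩ := hAC
    obtain ⟨-, hBne, hCBeq, hmaxCB, hc3, hc4, hp3, hp4, hq3, hq4⟩ := hCB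
    obtain ⟨-, hA'ne, hBA'eq, hmaxBA', hc5, hc6, hp5, hp6, hq5, hq6⟩ := hstep
    have hminCmemC : zmin C ∈ C := zmin_mem hCne
    have hminCnB : zmin C ∉ B := by
      intro hmem
      have := zmin_le hmem
      omega
    have hCdiff : C \ B = {zmin C} := by
      ext x
      simp only [Finset.mem_sdiff, Finset.mem_singleton]
      constructor
      · rintro ⟨hxC, hxB⟩
        rw [hCBeq] at hxC
        rcases Finset.mem_union.mp hxC with h | h
        · exact absurd h hxB
        · exact Finset.mem_singleton.mp h
      · rintro rfl
        exact ⟨hminCmemC, hminCnB⟩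
    have hmaxsing : zmax ({zmin C} : Finset ℤ) = zmin C :=
      zmax_unique (Finset.mem_singleton_self _)
        (fun x hx => le_of_eq (Finset.mem_singleton.mp hx))
    refine Or.inr (Or.inr (Or.inr ⟨C, B, hCne, hBne, hA'ne, hACeq, hBA'eq,
      hmaxAC, hmaxBA', ?_, ?_, ?_, hp1, hp2, hp5, hp6, hq1, hq2, hq5, hq6,
      hc1, hc2, hc5, hc6, ?_⟩))
    · rw [hCBeq]; exact Finset.subset_union_left
    · rw [hCdiff]; exact ⟨zmin C, Finset.mem_singleton_self _⟩
    · rw [hCdiff, hmaxsing]; omega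
    · intro y z hsucc
      obtain ⟨hy, hz, hyz, -⟩ := hsucc
      rw [hCdiff] at hy hz
      simp only [Finset.mem_union, Finset.mem_singleton] at hy hz
      rcases hy with rfl | rfl <;> rcases hz with rfl | rfl <;> omega
  · -- extend the four-set case: new A₂ := B
    obtain ⟨-, hA'ne, hBeq, hmaxBA', hc5, hc6, hp5, hp6, hq5, hq6⟩ := hstep
    have hminA₂ltB : zmin A₂ < zmin B := by omega
    have hmemA₂ : ∀ x : ℤ, x ∈ A₂ ↔ x ∈ B ∨ x = zmin A₂ := by
      intro x
      constructor
      · intro hx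
        rw [h5] at hx
        rcases Finset.mem_union.mp hx with h | h
        · exact Or.inl h
        · exact Or.inr (Finset.mem_singleton.mp h)
      · rintro (hx | rfl)
        · rw [h5]; exact Finset.mem_union_left _ hx
        · have h := Finset.mem_union_right B (Finset.mem_singleton_self (zmin A₂))
          rwa [← h5] at h
    have hminA₂nB : zmin A₂ ∉ B := by
      intro hmem
      have := zmin_le hmem
      omega
    have hminA₂A₁ : zmin A₂ ∈ A₁ := h8 (zmin_mem h2)
    have hBsubA₁ : B ⊆ A₁ := fun x hx => h8 ((hmemA₂ x).mpr (Or.inl hx))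
    have hBne2 : B.Nonempty := by
      rw [hBeq]; exact hA'ne.mono Finset.subset_union_left
    have hkey : A₁ \ B = (A₁ \ A₂) ∪ {zmin A₂} := by
      ext x
      simp only [Finset.mem_sdiff, Finset.mem_union, Finset.mem_singleton]
      constructor
      · rintro ⟨hxA₁, hxB⟩
        by_cases hx2 : x = zmin A₂
        · exact Or.inr hx2
        · refine Or.inl ⟨hxA₁, fun hxA₂ => ?_⟩
          rcases (hmemA₂ x).mp hxA₂ with h | h
          · exact hxB h
          · exact hx2 h
      · rintro (⟨hxA₁, hxA₂⟩ | rfl)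
        · exact ⟨hxA₁, fun hxB => hxA₂ ((hmemA₂ x).mpr (Or.inl hxB))⟩
        · exact ⟨hminA₂A₁, hminA₂nB⟩
    have hmaxdiff : zmax (A₁ \ B) = zmin A₂ := by
      rw [hkey]
      refine zmax_unique (Finset.mem_union_right _ (Finset.mem_singleton_self _)) ?_
      intro x hx
      rcases Finset.mem_union.mp hx with h | h
      · exact le_of_lt (lt_of_le_of_lt (le_zmax h) h10)
      · exact le_of_eq (Finset.mem_singleton.mp h)
    refine Or.inr (Or.inr (Or.inr ⟨A₁, B, h1, hBne2, hA'ne, h4, hBeq, h6,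
      hmaxBA', hBsubA₁, ?_, ?_, h11, h12, hp5, hp6, h15, h16, hq5, hq6,
      h19, h20, hc5, hc6, ?_⟩))
    · rw [hkey]
      exact ⟨zmin A₂, Finset.mem_union_right _ (Finset.mem_singleton_self _)⟩
    · rw [hmaxdiff]; exact hminA₂ltB
    · intro y z hsucc
      rw [hkey] at hsucc
      have hbound : ∀ x ∈ (A₁ \ A₂) ∪ {zmin A₂}, x < zmin B := by
        intro x hx
        rcases Finset.mem_union.mp hx with h | h
        · have := le_zmax h
          omega
        · rw [Finset.mem_singleton.mp h]; omega
      rcases isSucc_union_top hbound hsucc with hs | ⟨hyS, hub, rfl⟩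
      · exact h23 y z hs
      · have h1' : zmin A₂ ≤ y :=
          hub _ (Finset.mem_union_right _ (Finset.mem_singleton_self _))
        have h2' : y ≤ zmin A₂ := by
          rcases Finset.mem_union.mp hyS with h | h
          · have := le_zmax h
            omega
          · exact le_of_eq (Finset.mem_singleton.mp h)
        have : y = zmin A₂ := le_antisymm h2' h1'
        subst this
        omega

theorem stmt_7 (c c' p p' q q' : ℤ) (hc : 0 < c) (hcc' : c ≤ c')
    (A A' : Finset ℤ) :
    Relation.ReflTransGen (RII c c' p p' q q') A A' ↔
    (A = A' ∨ RII c c' p p' q q' A A' ∨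
      (∃ B, RII c c' p p' q q' A B ∧ RII c c' p p' q q' B A') ∨
      ∃ A₁ A₂ : Finset ℤ, A₁.Nonempty ∧ A₂.Nonempty ∧ A'.Nonempty ∧
        A = A₁ ∪ {zmin A} ∧ A₂ = A' ∪ {zmin A₂} ∧
        zmax A = zmax A₁ ∧ zmax A₂ = zmax A' ∧
        A₂ ⊆ A₁ ∧ (A₁ \ A₂).Nonempty ∧ zmax (A₁ \ A₂) < zmin A₂ ∧
        p ≤ zmax A - zmin A ∧ zmax A - zmin A ≤ p' ∧
        p ≤ zmax A₂ - zmin A₂ ∧ zmax A₂ - zmin A₂ ≤ p' ∧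
        q ≤ zmax A₁ - zmin A₁ ∧ zmax A₁ - zmin A₁ ≤ q' ∧
        q ≤ zmax A' - zmin A' ∧ zmax A' - zmin A' ≤ q' ∧
        c ≤ zmin A₁ - zmin A ∧ zmin A₁ - zmin A ≤ c' ∧
        c ≤ zmin A' - zmin A₂ ∧ zmin A' - zmin A₂ ≤ c' ∧
        ∀ y z : ℤ, isSucc ((A₁ \ A₂) ∪ {zmin A₂}) y z →
          c ≤ z - y ∧ z - y ≤ c') := by
  have key : Relation.ReflTransGen (RII c c' p p' q q') A A' ↔
      PII c c' p p' q q' A A' := by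
    constructor
    · intro h
      induction h with
      | refl => exact Or.inl rfl
      | tail hAB hBA' ih => exact forward_step c c' p p' q q' hc ih hBA'
    · rintro (rfl | h | ⟨B, hAB, hBA'⟩ |
        ⟨A₁, A₂, h1, h2, h3, h4, h5, h6, h7, h8, h9, h10, h11, h12, h13, h14,
          h15, h16, h17, h18, h19, h20, h21, h22, h23⟩)
      · exact Relation.ReflTransGen.refl
      · exact Relation.ReflTransGen.single h
      · exact (Relation.ReflTransGen.single hAB).tail hBA'
      · have hAne : A.Nonempty := by
          rw [h4]; exact h1.mono Finset.subset_union_left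
        have hRA : RII c c' p p' q q' A A₁ :=
          ⟨hAne, h1, h4, h6, h19, h20, h11, h12, h15, h16⟩
        have hR2 : RII c c' p p' q q' A₂ A' :=
          ⟨h2, h3, h5, h7, h21, h22, h13, h14, h17, h18⟩
        have hminA₂le : zmin A₂ ≤ zmax A₂ := zmin_le (zmax_mem h2)
        have hA₂leA₁ : zmax A₂ ≤ zmax A₁ := le_zmax (h8 (zmax_mem h2))
        have hmaxmem : zmax A₁ ∈ A₂ := by
          by_contra hcon
          have hd : zmax A₁ ∈ A₁ \ A₂ := Finset.mem_sdiff.mpr ⟨zmax_mem h1, hcon⟩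
          have h1' : zmax A₁ ≤ zmax (A₁ \ A₂) := le_zmax hd
          omega
        have hmax12 : zmax A₁ = zmax A₂ := le_antisymm (le_zmax hmaxmem) hA₂leA₁
        have hord : ∀ x ∈ A₁ \ A₂, x < zmin A₂ := fun x hx =>
          lt_of_le_of_lt (le_zmax hx) h10
        have hb1 : zmax A₁ - zmin A₁ ≤ p' := by omega
        have hb2 : q ≤ zmax A₂ - zmin A₂ := by omega
        have hchain := chain_lemma c c' p p' q q' hc (A₁ \ A₂).card A₁ A₂ rfl
          h2 h8 hord hmax12 h23 h13 hb1 hb2 h16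
        exact (Relation.ReflTransGen.head hRA hchain).tail hR2
  exact key
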